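/- arXiv:math/0606753 — 3 statements merged into one kernel-verified Lean document; each statement's English description precedes it below -/
import Mathlib

section
/- Let H ∈ (0,1) and K ∈ (0,1]. There exist positive constants c₇ and c₈ such that for all s, t ≥ 0: c₇ |t − s|^{2HK} ≤ R^{H,K}(t,t) + R^{H,K}(s,s) − 2 R^{H,K}(s,t) ≤ c₈ |t − s|^{2HK}. Equivalently, c₇ |t−s|^{2HK} ≤ E[(B₀^{H,K}(t) − B₀^{H,K}(s))²] ≤ c₈ |t−s|^{2HK} for a bifractional Brownian motion B₀^{H,K}. -/
open scoped Real

/-- The bifractional covariance function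
`R^{H,K}(s,t) = 2^{-K} [(t^{2H} + s^{2H})^K - |t-s|^{2HK}]`. -/
noncomputable def Rbif (H K s t : ℝ) : ℝ :=
  (2 : ℝ) ^ (-K) * ((t ^ (2 * H) + s ^ (2 * H)) ^ K - |t - s| ^ (2 * H * K))

open Real Set

/-- Midpoint concavity of `z ↦ z ^ r` for `0 ≤ r ≤ 1`. -/
lemma bif_mid_concave {r : ℝ} (hr0 : 0 ≤ r) (hr1 : r ≤ 1) {a b : ℝ} (ha : 0 ≤ a) (hb : 0 ≤ b) :
    a ^ r + b ^ r ≤ 2 * ((a + b) / 2) ^ r := by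
  have h := (Real.concaveOn_rpow hr0 hr1).2 (mem_Ici.2 ha) (mem_Ici.2 hb)
      (by norm_num : (0:ℝ) ≤ 1/2) (by norm_num : (0:ℝ) ≤ 1/2) (by norm_num)
  simp only [smul_eq_mul] at h
  rw [show (1/2 : ℝ) * a + (1/2 : ℝ) * b = (a + b) / 2 by ring] at h
  linarith

/-- Subadditivity of `z ↦ z ^ r` for `0 < r ≤ 1`. -/
lemma bif_rpow_subadd {r : ℝ} (hr0 : 0 < r) (hr1 : r ≤ 1) {a b : ℝ} (ha : 0 ≤ a) (hb : 0 ≤ b) :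
    (a + b) ^ r ≤ a ^ r + b ^ r := by
  have e : ∀ c : ℝ, 0 < c → c * c ^ (r - 1) = c ^ r := by
    intro c hc
    rw [← Real.rpow_one_add' hc.le (by rw [show (1:ℝ) + (r-1) = r by ring]; exact hr0.ne')]
    norm_num
  rcases ha.eq_or_lt with rfl | ha'
  · simp [Real.zero_rpow hr0.ne']
  rcases hb.eq_or_lt with rfl | hb'
  · simp [Real.zero_rpow hr0.ne']
  have hab : (0:ℝ) < a + b := by linarith
  have h1 : (a + b) ^ (r - 1) ≤ a ^ (r - 1) :=
    Real.rpow_le_rpow_of_nonpos ha' (by linarith) (by linarith)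
  have h2 : (a + b) ^ (r - 1) ≤ b ^ (r - 1) :=
    Real.rpow_le_rpow_of_nonpos hb' (by linarith) (by linarith)
  calc (a + b) ^ r = a * (a + b) ^ (r - 1) + b * (a + b) ^ (r - 1) := by
        rw [← add_mul, e _ hab]
    _ ≤ a * a ^ (r - 1) + b * b ^ (r - 1) := by
        have := mul_le_mul_of_nonneg_left h1 ha'.le
        have := mul_le_mul_of_nonneg_left h2 hb'.le
        linarith
    _ = a ^ r + b ^ r := by rw [e _ ha', e _ hb']

/-- Midpoint convexity of `z ↦ z ^ (K - 1)` on `(0, ∞)` for `0 < K ≤ 1`. -/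
lemma bif_mid_inv {K : ℝ} (hK0 : 0 < K) (hK1 : K ≤ 1) {a b : ℝ} (ha : 0 < a) (hb : 0 < b) :
    2 * ((a + b) / 2) ^ (K - 1) ≤ a ^ (K - 1) + b ^ (K - 1) := by
  have hm : (0:ℝ) < (a + b) / 2 := by linarith
  have hsum : a ^ (1 - K) + b ^ (1 - K) ≤ 2 * ((a + b) / 2) ^ (1 - K) :=
    bif_mid_concave (by linarith) (by linarith) ha.le hb.le
  have hA : 0 < a ^ (1 - K) := Real.rpow_pos_of_pos ha _
  have hB : 0 < b ^ (1 - K) := Real.rpow_pos_of_pos hb _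
  have hM : 0 < ((a + b) / 2) ^ (1 - K) := Real.rpow_pos_of_pos hm _
  have ek : ∀ c : ℝ, 0 < c → c ^ (K - 1) = (c ^ (1 - K))⁻¹ := by
    intro c hc
    rw [show K - 1 = -(1 - K) by ring, Real.rpow_neg hc.le]
  rw [ek a ha, ek b hb, ek _ hm, inv_eq_one_div, inv_eq_one_div, inv_eq_one_div,
    div_add_div _ _ hA.ne' hB.ne', mul_one_div, div_le_div_iff₀ hM (mul_pos hA hB)]
  nlinarith [sq_nonneg (a ^ (1 - K) - b ^ (1 - K)),
    mul_le_mul_of_nonneg_left hsum (by positivity : (0:ℝ) ≤ a ^ (1 - K) + b ^ (1 - K))]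

/-- Bernoulli-type inequality: `t^p - s^p ≤ p t^(p-1) (t - s)` for `p ≥ 1`. -/
lemma bif_bernoulli {p s t : ℝ} (hp : 1 ≤ p) (hs : 0 ≤ s) (hst : s ≤ t) (ht : 0 < t) :
    t ^ p - s ^ p ≤ p * t ^ (p - 1) * (t - s) := by
  have hx : (-1:ℝ) ≤ s / t - 1 := by
    have : 0 ≤ s / t := div_nonneg hs ht.le
    linarith
  have h := one_add_mul_self_le_rpow_one_add hx hp
  rw [show 1 + (s / t - 1) = s / t by ring, Real.div_rpow hs ht.le] at h
  have htp : 0 < t ^ p := Real.rpow_pos_of_pos ht p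
  have key : (1 + p * (s / t - 1)) * t ^ p ≤ s ^ p := by
    have := mul_le_mul_of_nonneg_right h htp.le
    rwa [div_mul_cancel₀ _ htp.ne'] at this
  have ht1 : t ^ (p - 1) = t ^ p / t := by rw [Real.rpow_sub ht, Real.rpow_one]
  have expand : (1 + p * (s / t - 1)) * t ^ p = t ^ p - p * (t ^ p / t) * (t - s) := by
    field_simp
    ring
  rw [expand, ← ht1] at key
  linarith

/-- Spreading inequality ("claim C"): for `0 < K ≤ 1`, `y, δ ≥ 0`,
`2 (y+δ)^K ≤ (y+2δ)^K + y^K + (2 - 2^K) δ^K`. -/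
lemma bif_claimC {K : ℝ} (hK0 : 0 < K) (hK1 : K ≤ 1) {y δ : ℝ} (hy : 0 ≤ y) (hδ : 0 ≤ δ) :
    2 * (y + δ) ^ K ≤ (y + 2 * δ) ^ K + y ^ K + (2 - 2 ^ K) * δ ^ K := by
  set ψ : ℝ → ℝ := fun z => 2 * (z + δ) ^ K - (z + 2 * δ) ^ K - z ^ K with hψdef
  have hcont : ContinuousOn ψ (Ici 0) := by
    apply ContinuousOn.sub
    apply ContinuousOn.sub
    · exact continuousOn_const.mul
        (((continuous_id.add continuous_const).continuousOn).rpow_const fun x _ => Or.inr hK0.le)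
    · exact ((continuous_id.add continuous_const).continuousOn).rpow_const
        fun x _ => Or.inr hK0.le
    · exact continuous_id.continuousOn.rpow_const fun x _ => Or.inr hK0.le
  have hderiv : ∀ z ∈ Ioi (0:ℝ), HasDerivAt ψ
      (2 * (1 * K * (z + δ) ^ (K - 1)) - 1 * K * (z + 2 * δ) ^ (K - 1)
        - 1 * K * z ^ (K - 1)) z := by
    intro z hz
    have hz0 : (0:ℝ) < z := hz
    have h1 : HasDerivAt (fun z : ℝ => (z + δ) ^ K) (1 * K * (z + δ) ^ (K - 1)) z :=
      ((hasDerivAt_id z).add_const δ).rpow_const (Or.inl (by positivity))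
    have h2 : HasDerivAt (fun z : ℝ => (z + 2 * δ) ^ K) (1 * K * (z + 2 * δ) ^ (K - 1)) z :=
      ((hasDerivAt_id z).add_const (2 * δ)).rpow_const (Or.inl (by positivity))
    have h3 : HasDerivAt (fun z : ℝ => z ^ K) (1 * K * z ^ (K - 1)) z := by
      simpa using (hasDerivAt_id z).rpow_const (Or.inl hz0.ne')
    exact ((h1.const_mul 2).sub h2).sub h3
  have hanti : AntitoneOn ψ (Ici 0) := by
    apply antitoneOn_of_deriv_nonpos (convex_Ici 0) hcont
    · intro z hz
      rw [interior_Ici] at hz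
      exact ((hderiv z hz).differentiableAt).differentiableWithinAt
    · intro z hz
      rw [interior_Ici] at hz
      rw [(hderiv z hz).deriv]
      have hz0 : (0:ℝ) < z := hz
      have hmid : 2 * ((z + (z + 2 * δ)) / 2) ^ (K - 1) ≤ z ^ (K - 1) + (z + 2 * δ) ^ (K - 1) :=
        bif_mid_inv hK0 hK1 hz0 (by positivity)
      rw [show (z + (z + 2 * δ)) / 2 = z + δ by ring] at hmid
      nlinarith [mul_le_mul_of_nonneg_left hmid hK0.le]
  have h0 : ψ y ≤ ψ 0 := hanti self_mem_Ici (mem_Ici.2 hy) hy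
  have hψ0 : ψ 0 = (2 - 2 ^ K) * δ ^ K := by
    simp only [hψdef, zero_add, Real.zero_rpow hK0.ne']
    rw [Real.mul_rpow (by norm_num : (0:ℝ) ≤ 2) hδ]
    ring
  have hψy : ψ y = 2 * (y + δ) ^ K - (y + 2 * δ) ^ K - y ^ K := rfl
  rw [hψ0, hψy] at h0
  linarith

/-- Difference bound for `z ↦ z^(K-1)`:
`(y+δ)^(K-1) - (y+2δ)^(K-1) ≤ (1-K) y^(K-2) δ`. -/
lemma bif_diff_le {K : ℝ} (hK0 : 0 < K) (hK1 : K ≤ 1) {y δ : ℝ} (hy : 0 < y) (hδ : 0 ≤ δ) :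
    (y + δ) ^ (K - 1) - (y + 2 * δ) ^ (K - 1) ≤ (1 - K) * y ^ (K - 2) * δ := by
  set φ : ℝ → ℝ := fun u => (1 - K) * y ^ (K - 2) * u + (y + 2 * u) ^ (K - 1)
      - (y + u) ^ (K - 1) with hφdef
  have hcont : ContinuousOn φ (Ici 0) := by
    apply ContinuousOn.sub
    apply ContinuousOn.add
    · exact continuousOn_const.mul continuousOn_id
    · refine ((continuous_const.add (continuous_const.mul continuous_id)).continuousOn).rpow_const
        fun x hx => Or.inl ?_
      have hx' : (0:ℝ) ≤ x := hx
      have : (0:ℝ) < y + 2 * x := by linarith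
      exact this.ne'
    · refine ((continuous_const.add continuous_id).continuousOn).rpow_const
        fun x hx => Or.inl ?_
      have hx' : (0:ℝ) ≤ x := hx
      have : (0:ℝ) < y + x := by linarith
      exact this.ne'
  have hderiv : ∀ u ∈ Ioi (0:ℝ), HasDerivAt φ
      ((1 - K) * y ^ (K - 2) + 2 * (K - 1) * (y + 2 * u) ^ (K - 1 - 1)
        - 1 * (K - 1) * (y + u) ^ (K - 1 - 1)) u := by
    intro u hu
    have hu0 : (0:ℝ) < u := hu
    have hA : HasDerivAt (fun u : ℝ => (1 - K) * y ^ (K - 2) * u)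
        ((1 - K) * y ^ (K - 2)) u := by
      simpa using (hasDerivAt_id u).const_mul ((1 - K) * y ^ (K - 2))
    have hlin : HasDerivAt (fun u : ℝ => y + 2 * u) 2 u := by
      simpa using ((hasDerivAt_id u).const_mul (2:ℝ)).const_add y
    have hB : HasDerivAt (fun u : ℝ => (y + 2 * u) ^ (K - 1))
        (2 * (K - 1) * (y + 2 * u) ^ (K - 1 - 1)) u :=
      hlin.rpow_const (Or.inl (by positivity))
    have hC : HasDerivAt (fun u : ℝ => (y + u) ^ (K - 1))
        (1 * (K - 1) * (y + u) ^ (K - 1 - 1)) u :=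
      ((hasDerivAt_id u).const_add y).rpow_const (Or.inl (by positivity))
    exact (hA.add hB).sub hC
  have hmono : MonotoneOn φ (Ici 0) := by
    apply monotoneOn_of_deriv_nonneg (convex_Ici 0) hcont
    · intro u hu
      rw [interior_Ici] at hu
      exact ((hderiv u hu).differentiableAt).differentiableWithinAt
    · intro u hu
      rw [interior_Ici] at hu
      rw [(hderiv u hu).deriv]
      have hu0 : (0:ℝ) < u := hu
      have h1 : (y + 2 * u) ^ (K - 1 - 1) ≤ (y + u) ^ (K - 1 - 1) :=
        Real.rpow_le_rpow_of_nonpos (by linarith) (by linarith) (by linarith)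
      have h2 : (y + 2 * u) ^ (K - 1 - 1) ≤ y ^ (K - 1 - 1) :=
        Real.rpow_le_rpow_of_nonpos hy (by linarith) (by linarith)
      have hy12 : y ^ (K - 1 - 1) = y ^ (K - 2) := by rw [show K - 1 - 1 = K - 2 by ring]
      rw [hy12] at h2
      have ha : 0 ≤ (1 - K) * (y ^ (K - 2) - (y + 2 * u) ^ (K - 1 - 1)) :=
        mul_nonneg (by linarith) (by linarith)
      have hb : 0 ≤ (1 - K) * ((y + u) ^ (K - 1 - 1) - (y + 2 * u) ^ (K - 1 - 1)) :=
        mul_nonneg (by linarith) (by linarith)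
      nlinarith [ha, hb]
  have h0 : φ 0 ≤ φ δ := hmono self_mem_Ici (mem_Ici.2 hδ) hδ
  have hφ0 : φ 0 = 0 := by
    simp only [hφdef, mul_zero, add_zero, zero_add, sub_self]
  have hφδ : φ δ = (1 - K) * y ^ (K - 2) * δ + (y + 2 * δ) ^ (K - 1) - (y + δ) ^ (K - 1) := rfl
  rw [hφ0, hφδ] at h0
  linarith

/-- Quadratic (Taylor-type) bound:
`2 (y+δ)^K ≤ (y+2δ)^K + y^K + K (1-K) y^(K-2) δ²` for `y > 0`. -/
lemma bif_quad {K : ℝ} (hK0 : 0 < K) (hK1 : K ≤ 1) {y δ : ℝ} (hy : 0 < y) (hδ : 0 ≤ δ) :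
    2 * (y + δ) ^ K ≤ (y + 2 * δ) ^ K + y ^ K + K * (1 - K) * y ^ (K - 2) * δ ^ 2 := by
  set F : ℝ → ℝ := fun u => (y + 2 * u) ^ K + K * (1 - K) * y ^ (K - 2) * u ^ 2
      - 2 * (y + u) ^ K with hFdef
  have hcont : ContinuousOn F (Ici 0) := by
    apply ContinuousOn.sub
    apply ContinuousOn.add
    · refine ((continuous_const.add (continuous_const.mul continuous_id)).continuousOn).rpow_const
        fun x hx => Or.inl ?_
      have hx' : (0:ℝ) ≤ x := hx
      have : (0:ℝ) < y + 2 * x := by linarith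
      exact this.ne'
    · exact continuousOn_const.mul (continuousOn_pow 2)
    · exact continuousOn_const.mul
        (((continuous_const.add continuous_id).continuousOn).rpow_const
          fun x hx => Or.inl (by
            have hx' : (0:ℝ) ≤ x := hx
            have : (0:ℝ) < y + x := by linarith
            exact this.ne'))
  have hderiv : ∀ u ∈ Ioi (0:ℝ), HasDerivAt F
      (2 * K * (y + 2 * u) ^ (K - 1) + K * (1 - K) * y ^ (K - 2) * ((2:ℕ) * u ^ (2 - 1))
        - 2 * (1 * K * (y + u) ^ (K - 1))) u := by
    intro u hu
    have hu0 : (0:ℝ) < u := hu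
    have hlin : HasDerivAt (fun u : ℝ => y + 2 * u) 2 u := by
      simpa using ((hasDerivAt_id u).const_mul (2:ℝ)).const_add y
    have hA : HasDerivAt (fun u : ℝ => (y + 2 * u) ^ K)
        (2 * K * (y + 2 * u) ^ (K - 1)) u :=
      hlin.rpow_const (Or.inl (by positivity))
    have hB : HasDerivAt (fun u : ℝ => K * (1 - K) * y ^ (K - 2) * u ^ 2)
        (K * (1 - K) * y ^ (K - 2) * ((2:ℕ) * u ^ (2 - 1))) u :=
      (hasDerivAt_pow 2 u).const_mul (K * (1 - K) * y ^ (K - 2))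
    have hC : HasDerivAt (fun u : ℝ => 2 * (y + u) ^ K)
        (2 * (1 * K * (y + u) ^ (K - 1))) u :=
      (((hasDerivAt_id u).const_add y).rpow_const (Or.inl (by positivity))).const_mul 2
    exact (hA.add hB).sub hC
  have hmono : MonotoneOn F (Ici 0) := by
    apply monotoneOn_of_deriv_nonneg (convex_Ici 0) hcont
    · intro u hu
      rw [interior_Ici] at hu
      exact ((hderiv u hu).differentiableAt).differentiableWithinAt
    · intro u hu
      rw [interior_Ici] at hu
      rw [(hderiv u hu).deriv]
      have hu0 : (0:ℝ) < u := hu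
      have hdle : (y + u) ^ (K - 1) - (y + 2 * u) ^ (K - 1) ≤ (1 - K) * y ^ (K - 2) * u :=
        bif_diff_le hK0 hK1 hy hu0.le
      have := mul_le_mul_of_nonneg_left hdle (by positivity : (0:ℝ) ≤ 2 * K)
      have hsimp : ((2:ℕ) : ℝ) * u ^ (2 - 1) = 2 * u := by norm_num
      rw [hsimp]
      nlinarith [this]
  have h0 : F 0 ≤ F δ := hmono self_mem_Ici (mem_Ici.2 hδ) hδ
  have hF0 : F 0 = -y ^ K := by
    simp only [hFdef]
    norm_num
    ring
  have hFδ : F δ = (y + 2 * δ) ^ K + K * (1 - K) * y ^ (K - 2) * δ ^ 2 - 2 * (y + δ) ^ K := rfl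
  rw [hF0, hFδ] at h0
  linarith

/-- Core bound: `G := 2 ((t^p+s^p)/2)^K - (t^p)^K - (s^p)^K ≤ Cmax (t-s)^(pK)`. -/
lemma bif_G_bound {K p s t : ℝ} (hK0 : 0 < K) (hK1 : K ≤ 1) (hp0 : 0 < p) (hp2 : p < 2)
    (hpK2 : p * K < 2) (hs : 0 ≤ s) (hst : s ≤ t) :
    2 * ((t ^ p + s ^ p) / 2) ^ K - (t ^ p) ^ K - (s ^ p) ^ K ≤
      max ((2 - 2 ^ K) * 2 ^ K) (4 * K * (1 - K)) * (t - s) ^ (p * K) := by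
  have ht : 0 ≤ t := hs.trans hst
  set M : ℝ := max ((2 - 2 ^ K) * 2 ^ K) (4 * K * (1 - K)) with hMdef
  set x := t ^ p with hx
  set y := s ^ p with hy
  set d := t - s with hd
  clear_value x y d
  have hd0 : 0 ≤ d := by rw [hd]; linarith
  have hxn : 0 ≤ x := hx ▸ Real.rpow_nonneg ht p
  have hyn : 0 ≤ y := hy ▸ Real.rpow_nonneg hs p
  have hyx : y ≤ x := by rw [hx, hy]; exact Real.rpow_le_rpow hs hst hp0.le
  have h2K1 : (1:ℝ) < 2 ^ K :=
    (Real.one_lt_rpow_iff_of_pos two_pos).2 (Or.inl ⟨one_lt_two, hK0⟩)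
  have h2K2 : (2:ℝ) ^ K ≤ 2 := by
    calc (2:ℝ) ^ K ≤ 2 ^ (1:ℝ) := Real.rpow_le_rpow_of_exponent_le one_le_two hK1
      _ = 2 := Real.rpow_one 2
  rcases eq_or_lt_of_le hd0 with hdz | hdpos
  · -- t = s
    have hts : t = s := by rw [hd] at hdz; linarith
    have hxy : x = y := by rw [hx, hy, hts]
    rw [hxy, show (y + y) / 2 = y by ring, ← hdz, Real.zero_rpow (by positivity : p * K ≠ 0),
      mul_zero]
    linarith
  · -- t > s
    have ht0 : 0 < t := by rw [hd] at hdpos; linarith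
    set δ := (x - y) / 2 with hδdef
    clear_value δ
    have hδ0 : 0 ≤ δ := by rw [hδdef]; linarith
    have hGC : 2 * ((x + y) / 2) ^ K - x ^ K - y ^ K ≤ (2 - 2 ^ K) * δ ^ K := by
      have h := bif_claimC hK0 hK1 hyn hδ0
      rw [show y + δ = (x + y) / 2 by rw [hδdef]; ring,
        show y + 2 * δ = x by rw [hδdef]; ring] at h
      linarith
    have hdpK : 0 ≤ d ^ (p * K) := Real.rpow_nonneg hd0 _
    -- common "far" estimate, valid whenever `δ ≤ 2 d^p`
    have far : δ ≤ 2 * d ^ p → 2 * ((x + y) / 2) ^ K - x ^ K - y ^ K ≤ M * d ^ (p * K) := by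
      intro hδle
      have hδK : δ ^ K ≤ 2 ^ K * d ^ (p * K) := by
        calc δ ^ K ≤ (2 * d ^ p) ^ K := Real.rpow_le_rpow hδ0 hδle hK0.le
          _ = 2 ^ K * (d ^ p) ^ K :=
            Real.mul_rpow (by norm_num) (Real.rpow_nonneg hd0 p)
          _ = 2 ^ K * d ^ (p * K) := by rw [← Real.rpow_mul hd0]
      calc 2 * ((x + y) / 2) ^ K - x ^ K - y ^ K ≤ (2 - 2 ^ K) * δ ^ K := hGC
        _ ≤ (2 - 2 ^ K) * (2 ^ K * d ^ (p * K)) :=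
          mul_le_mul_of_nonneg_left hδK (by linarith)
        _ = (2 - 2 ^ K) * 2 ^ K * d ^ (p * K) := by ring
        _ ≤ M * d ^ (p * K) := mul_le_mul_of_nonneg_right (le_max_left _ _) hdpK
    by_cases hple : p ≤ 1
    · -- small exponent case: subadditivity gives δ ≤ d^p / 2
      apply far
      have hsub : x ≤ y + d ^ p := by
        have h := bif_rpow_subadd hp0 hple hs hd0
        rw [show s + d = t by rw [hd]; ring] at h
        rw [hx, hy]
        exact h
      have hdp0 : 0 ≤ d ^ p := Real.rpow_nonneg hd0 p
      rw [hδdef]; linarith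
    · -- p > 1 : Bernoulli
      push_neg at hple
      have hbern : x - y ≤ p * t ^ (p - 1) * d := by
        rw [hx, hy, hd]
        exact bif_bernoulli hple.le hs hst ht0
      have htpn : 0 ≤ t ^ (p - 1) := Real.rpow_nonneg ht _
      have hδt : δ ≤ t ^ (p - 1) * d := by
        have h2 : p * t ^ (p - 1) * d ≤ 2 * (t ^ (p - 1) * d) := by
          nlinarith [mul_nonneg htpn hd0]
        have h3 : x - y ≤ 2 * (t ^ (p - 1) * d) := le_trans hbern h2
        rw [hδdef]; linarith
      by_cases hfar : s ≤ t / 2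
      · -- far from the diagonal : t ≤ 2 d
        apply far
        have ht2d : t ≤ 2 * d := by rw [hd]; linarith
        have htp1 : t ^ (p - 1) ≤ (2 * d) ^ (p - 1) :=
          Real.rpow_le_rpow ht ht2d (by linarith)
        have h2d : (2 * d) ^ (p - 1) = 2 ^ (p - 1) * d ^ (p - 1) :=
          Real.mul_rpow (by norm_num) hd0
        have h2p : (2:ℝ) ^ (p - 1) ≤ 2 := by
          calc (2:ℝ) ^ (p - 1) ≤ 2 ^ (1:ℝ) :=
            Real.rpow_le_rpow_of_exponent_le one_le_two (by linarith)
            _ = 2 := Real.rpow_one 2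
        have hdp : d ^ (p - 1) * d = d ^ p := by
          have h := Real.rpow_add hdpos (p - 1) 1
          rw [Real.rpow_one] at h
          rw [← h]
          ring_nf
        have hdp1n : 0 ≤ d ^ (p - 1) := Real.rpow_nonneg hd0 _
        have h3 : t ^ (p - 1) * d ≤ 2 ^ (p - 1) * d ^ (p - 1) * d := by
          have := mul_le_mul_of_nonneg_right (htp1.trans_eq h2d) hd0
          linarith
        have h4 : 2 ^ (p - 1) * d ^ (p - 1) * d ≤ 2 * d ^ p := by
          rw [mul_assoc, hdp]
          exact mul_le_mul_of_nonneg_right h2p (Real.rpow_nonneg hd0 p)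
        linarith
      · -- near the diagonal : s > t/2
        push_neg at hfar
        have hs0 : 0 < s := by linarith
        have hy0 : 0 < y := by rw [hy]; exact Real.rpow_pos_of_pos hs0 p
        have hquad : 2 * ((x + y) / 2) ^ K - x ^ K - y ^ K ≤
            K * (1 - K) * y ^ (K - 2) * δ ^ 2 := by
          have h := bif_quad hK0 hK1 hy0 hδ0
          rw [show y + δ = (x + y) / 2 by rw [hδdef]; ring,
            show y + 2 * δ = x by rw [hδdef]; ring] at h
          linarith
        have ht20 : (0:ℝ) < t / 2 := by linarith
        have hd2 : d ≤ t / 2 := by rw [hd]; linarith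
        have hyge : (t / 2) ^ p ≤ y := by
          rw [hy]; exact Real.rpow_le_rpow ht20.le (by linarith) hp0.le
        have hyK2 : y ^ (K - 2) ≤ ((t / 2) ^ p) ^ (K - 2) :=
          Real.rpow_le_rpow_of_nonpos (Real.rpow_pos_of_pos ht20 p) hyge (by linarith)
        have hδsq : δ ^ 2 ≤ (t ^ (p - 1) * d) ^ 2 := by
          have := mul_le_mul_of_nonneg_left hδt hδ0
          have h2 := mul_le_mul_of_nonneg_right hδt (mul_nonneg htpn hd0)
          nlinarith
        -- the exponent computation
        have hcomp : ((t / 2) ^ p) ^ (K - 2) * (t ^ (p - 1) * d) ^ 2 ≤ 4 * d ^ (p * K) := by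
          have a1 : ((t / 2) ^ p) ^ (K - 2) = (t / 2) ^ (p * (K - 2)) :=
            (Real.rpow_mul ht20.le p (K - 2)).symm
          have a2 : (t ^ (p - 1) * d) ^ 2 = t ^ (2 * p - 2) * d ^ (2:ℝ) := by
            rw [mul_pow]
            congr 1
            · rw [← Real.rpow_natCast (t ^ (p - 1)) 2, ← Real.rpow_mul ht]
              norm_num
              ring_nf
            · rw [← Real.rpow_natCast d 2]
              norm_num
          have a3 : d ^ (2:ℝ) = d ^ (p * K) * d ^ (2 - p * K) := by
            rw [← Real.rpow_add hdpos]
            norm_num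
          have a4 : d ^ (2 - p * K) ≤ (t / 2) ^ (2 - p * K) :=
            Real.rpow_le_rpow hd0 hd2 (by linarith)
          have a5 : (t / 2) ^ (p * (K - 2)) * (t / 2) ^ (2 - p * K) = (t / 2) ^ (2 - 2 * p) := by
            rw [← Real.rpow_add ht20]
            ring_nf
          have a6 : (t / 2) ^ (2 - 2 * p) * t ^ (2 * p - 2) = 2 ^ (2 * p - 2) := by
            rw [Real.div_rpow ht (by norm_num : (0:ℝ) ≤ 2), div_mul_eq_mul_div,
              ← Real.rpow_add ht0]
            rw [show 2 - 2 * p + (2 * p - 2) = 0 by ring, Real.rpow_zero]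
            rw [show (2:ℝ) ^ (2 - 2 * p) = (2 ^ (2 * p - 2) : ℝ)⁻¹ by
              rw [← Real.rpow_neg (by norm_num : (0:ℝ) ≤ 2), show -(2 * p - 2) = 2 - 2 * p by ring]]
            rw [one_div, inv_inv]
          have a7 : (2:ℝ) ^ (2 * p - 2) ≤ 4 := by
            calc (2:ℝ) ^ (2 * p - 2) ≤ 2 ^ (2:ℝ) :=
              Real.rpow_le_rpow_of_exponent_le one_le_two (by linarith)
              _ = 4 := by
                rw [show (2:ℝ) = ((2:ℕ):ℝ) by norm_num, Real.rpow_natCast]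
                norm_num
          have hposA : 0 ≤ (t / 2) ^ (p * (K - 2)) := Real.rpow_nonneg ht20.le _
          have hposT : 0 ≤ t ^ (2 * p - 2) := Real.rpow_nonneg ht _
          calc ((t / 2) ^ p) ^ (K - 2) * (t ^ (p - 1) * d) ^ 2
              = (t / 2) ^ (p * (K - 2)) * (t ^ (2 * p - 2) * (d ^ (p * K) * d ^ (2 - p * K))) := by
                rw [a1, a2, a3]
            _ ≤ (t / 2) ^ (p * (K - 2)) * (t ^ (2 * p - 2) * (d ^ (p * K) * (t / 2) ^ (2 - p * K))) := by
                have : d ^ (p * K) * d ^ (2 - p * K) ≤ d ^ (p * K) * (t / 2) ^ (2 - p * K) :=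
                  mul_le_mul_of_nonneg_left a4 hdpK
                have h2 := mul_le_mul_of_nonneg_left this hposT
                exact mul_le_mul_of_nonneg_left h2 hposA
            _ = (t / 2) ^ (p * (K - 2)) * (t / 2) ^ (2 - p * K) * t ^ (2 * p - 2) * d ^ (p * K) := by
                ring
            _ = 2 ^ (2 * p - 2) * d ^ (p * K) := by rw [a5, a6]
            _ ≤ 4 * d ^ (p * K) := mul_le_mul_of_nonneg_right a7 hdpK
        have hKK : 0 ≤ K * (1 - K) := mul_nonneg hK0.le (by linarith)
        calc 2 * ((x + y) / 2) ^ K - x ^ K - y ^ K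
            ≤ K * (1 - K) * y ^ (K - 2) * δ ^ 2 := hquad
          _ ≤ K * (1 - K) * (((t / 2) ^ p) ^ (K - 2) * (t ^ (p - 1) * d) ^ 2) := by
              have h5 : y ^ (K - 2) * δ ^ 2 ≤ ((t / 2) ^ p) ^ (K - 2) * (t ^ (p - 1) * d) ^ 2 :=
                mul_le_mul hyK2 hδsq (sq_nonneg δ)
                  (Real.rpow_nonneg (Real.rpow_nonneg ht20.le p) _)
              calc K * (1 - K) * y ^ (K - 2) * δ ^ 2
                  = K * (1 - K) * (y ^ (K - 2) * δ ^ 2) := by ring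
                _ ≤ K * (1 - K) * (((t / 2) ^ p) ^ (K - 2) * (t ^ (p - 1) * d) ^ 2) :=
                  mul_le_mul_of_nonneg_left h5 hKK
          _ ≤ K * (1 - K) * (4 * d ^ (p * K)) := mul_le_mul_of_nonneg_left hcomp hKK
          _ = 4 * K * (1 - K) * d ^ (p * K) := by ring
          _ ≤ M * d ^ (p * K) := mul_le_mul_of_nonneg_right (le_max_right _ _) hdpK

/-- Diagonal value of the bifractional covariance. -/
lemma bif_diag {H K : ℝ} (hH : 0 < H) (hK0 : 0 < K) {u : ℝ} (hu : 0 ≤ u) :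
    Rbif H K u u = (u ^ (2 * H)) ^ K := by
  unfold Rbif
  rw [sub_self, abs_zero, Real.zero_rpow (by positivity : 2 * H * K ≠ 0), sub_zero,
    show u ^ (2 * H) + u ^ (2 * H) = 2 * u ^ (2 * H) by ring,
    Real.mul_rpow (by norm_num : (0:ℝ) ≤ 2) (Real.rpow_nonneg hu _), ← mul_assoc,
    ← Real.rpow_add two_pos, neg_add_cancel, Real.rpow_zero, one_mul]

/-- Both bounds, in the ordered case `0 ≤ s ≤ t`. -/
lemma bif_key (H K : ℝ) (hH : H ∈ Set.Ioo (0:ℝ) 1) (hK : K ∈ Set.Ioc (0:ℝ) 1)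
    {s t : ℝ} (hs : 0 ≤ s) (hst : s ≤ t) :
    ((2:ℝ) ^ (1 - K) - max ((2 - 2 ^ K) * 2 ^ K) (4 * K * (1 - K))) * (t - s) ^ (2 * H * K) ≤
        Rbif H K t t + Rbif H K s s - 2 * Rbif H K s t ∧
      Rbif H K t t + Rbif H K s s - 2 * Rbif H K s t ≤
        (2:ℝ) ^ (1 - K) * (t - s) ^ (2 * H * K) := by
  obtain ⟨hH0, hH1⟩ := hH
  obtain ⟨hK0, hK1⟩ := hK
  have ht : 0 ≤ t := hs.trans hst
  have hxyn : (0:ℝ) ≤ t ^ (2 * H) + s ^ (2 * H) := by positivity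
  have hE : Rbif H K t t + Rbif H K s s - 2 * Rbif H K s t
      = (t ^ (2 * H)) ^ K + (s ^ (2 * H)) ^ K
        - 2 * ((t ^ (2 * H) + s ^ (2 * H)) / 2) ^ K
        + (2:ℝ) ^ (1 - K) * (t - s) ^ (2 * H * K) := by
    rw [bif_diag hH0 hK0 ht, bif_diag hH0 hK0 hs]
    unfold Rbif
    rw [abs_of_nonneg (by linarith : (0:ℝ) ≤ t - s)]
    have hhalf : 2 * ((t ^ (2 * H) + s ^ (2 * H)) / 2) ^ K
        = 2 * (2:ℝ) ^ (-K) * (t ^ (2 * H) + s ^ (2 * H)) ^ K := by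
      rw [Real.div_rpow hxyn (by norm_num : (0:ℝ) ≤ 2), div_eq_mul_inv,
        ← Real.rpow_neg (by norm_num : (0:ℝ) ≤ 2)]
      ring
    have h2K : (2:ℝ) ^ (1 - K) = 2 * (2:ℝ) ^ (-K) := by
      rw [show (1:ℝ) - K = 1 + -K by ring, Real.rpow_add two_pos, Real.rpow_one]
    rw [hhalf, h2K]
    ring
  have hG := bif_G_bound hK0 hK1 (by linarith : (0:ℝ) < 2 * H) (by linarith)
    (by nlinarith : 2 * H * K < 2) hs hst
  have hdpK : (0:ℝ) ≤ (t - s) ^ (2 * H * K) := Real.rpow_nonneg (by linarith) _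
  constructor
  · rw [hE, sub_mul]
    have hG' : 2 * ((t ^ (2 * H) + s ^ (2 * H)) / 2) ^ K - (t ^ (2 * H)) ^ K
        - (s ^ (2 * H)) ^ K ≤
        max ((2 - 2 ^ K) * 2 ^ K) (4 * K * (1 - K)) * (t - s) ^ (2 * H * K) := hG
    linarith
  · rw [hE]
    have hcon := bif_mid_concave hK0.le hK1 (Real.rpow_nonneg ht (2 * H))
      (Real.rpow_nonneg hs (2 * H))
    linarith

/-- Lemma 2.3: there are positive constants `c₇, c₈` with
`c₇ |t-s|^{2HK} ≤ E[(B^{H,K}(t) - B^{H,K}(s))²] ≤ c₈ |t-s|^{2HK}` for all `s, t ≥ 0`,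
where `E[(B^{H,K}(t) - B^{H,K}(s))²] = R(t,t) + R(s,s) - 2 R(s,t)`. -/
theorem bifBM_increment_variance_bounds (H K : ℝ) (hH : H ∈ Set.Ioo (0:ℝ) 1)
    (hK : K ∈ Set.Ioc (0:ℝ) 1) :
    ∃ c₇ c₈ : ℝ, 0 < c₇ ∧ 0 < c₈ ∧ ∀ s t : ℝ, 0 ≤ s → 0 ≤ t →
      c₇ * |t - s| ^ (2 * H * K) ≤
          Rbif H K t t + Rbif H K s s - 2 * Rbif H K s t ∧
        Rbif H K t t + Rbif H K s s - 2 * Rbif H K s t ≤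
          c₈ * |t - s| ^ (2 * H * K) := by
  obtain ⟨hK0, hK1⟩ := hK
  refine ⟨(2:ℝ) ^ (1 - K) - max ((2 - 2 ^ K) * 2 ^ K) (4 * K * (1 - K)), (2:ℝ) ^ (1 - K),
    ?_, Real.rpow_pos_of_pos two_pos _, ?_⟩
  · -- positivity of c₇
    have h2K1 : (1:ℝ) < 2 ^ K :=
      (Real.one_lt_rpow_iff_of_pos two_pos).2 (Or.inl ⟨one_lt_two, hK0⟩)
    have h2K2 : (2:ℝ) ^ K ≤ 2 := by
      calc (2:ℝ) ^ K ≤ 2 ^ (1:ℝ) := Real.rpow_le_rpow_of_exponent_le one_le_two hK1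
        _ = 2 := Real.rpow_one 2
    have h2mK : (2:ℝ) ^ (1 - K) = 2 / 2 ^ K := by
      rw [Real.rpow_sub two_pos, Real.rpow_one]
    have hm1 : (2 - 2 ^ K) * 2 ^ K < (2:ℝ) ^ (1 - K) := by
      rw [h2mK, lt_div_iff₀ (by linarith : (0:ℝ) < 2 ^ K)]
      nlinarith [mul_pos (mul_pos (by linarith : (0:ℝ) < 2 ^ K)
        (by linarith : (0:ℝ) < 2 ^ K - 1)) (by linarith : (0:ℝ) < 2 ^ K - 1)]
    have hm2 : 4 * K * (1 - K) < (2:ℝ) ^ (1 - K) := by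
      rcases eq_or_lt_of_le hK1 with rfl | hKlt
      · simp
      · have h1 : 4 * K * (1 - K) ≤ 1 := by nlinarith [sq_nonneg (2 * K - 1)]
        have h2 : (1:ℝ) < 2 ^ (1 - K) :=
          (Real.one_lt_rpow_iff_of_pos two_pos).2 (Or.inl ⟨one_lt_two, by linarith⟩)
        linarith
    have := max_lt hm1 hm2
    linarith
  · intro s t hs ht
    rcases le_total s t with h | h
    · have hkey := bif_key H K hH ⟨hK0, hK1⟩ hs h
      rw [abs_of_nonneg (by linarith : (0:ℝ) ≤ t - s)]
      exact hkey
    · have hkey := bif_key H K hH ⟨hK0, hK1⟩ ht h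
      have hsym : Rbif H K s t = Rbif H K t s := by
        unfold Rbif
        rw [abs_sub_comm, add_comm (t ^ (2 * H))]
      rw [abs_sub_comm, abs_of_nonneg (by linarith : (0:ℝ) ≤ s - t), hsym]
      exact ⟨by linarith [hkey.1], by linarith [hkey.2]⟩
end

section
/- Let κ > 0 and let μ be a Borel probability measure on the space C([0,∞), ℝ) of continuous paths (with the topology of uniform convergence on compact sets), concentrated on paths ω with ω(0) = 0. For a > 0 define the scaling transformation S_{κ,a} : C([0,∞),ℝ) → C([0,∞),ℝ) by (S_{κ,a} ω)(t) = a^{−κ} ω(at). Assume that μ is invariant under S_{κ,a} for every a > 0 (self-similarity with index κ), and that for every a > 0 with a ≠ 1 the transformation S_{κ,a} is ergodic with respect to μ. Then for every increasing function ψ : (0,∞) → (0,∞), the event E_{κ,ψ} = { ω : there exists δ > 0 such that sup_{0 ≤ s ≤ t} |ω(s)| ≥ t^κ ψ(t) for all 0 < t ≤ δ } satisfies μ(E_{κ,ψ}) = 0 or 1. -/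
open MeasureTheory Filter Topology

open MeasureTheory Filter Topology

def ratEvent (κ : ℝ) (ψ : ℝ → ℝ) : Set (ℝ → ℝ) :=
  {ω | ∃ δ : ℚ, 0 < δ ∧ ∀ q : ℚ, 0 < q → q ≤ δ → ∀ n : ℕ,
    ∃ r : ℚ, 0 ≤ r ∧ r ≤ q ∧ (q : ℝ) ^ κ * ψ q - 1 / (n + 1) < |ω r|}

lemma ratEvent_measurableSet (κ : ℝ) (ψ : ℝ → ℝ) : MeasurableSet (ratEvent κ ψ) := by
  have h : ratEvent κ ψ =
      ⋃ (δ : ℚ) (_ : 0 < δ), ⋂ (q : ℚ) (_ : 0 < q) (_ : q ≤ δ), ⋂ (n : ℕ),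
        ⋃ (r : ℚ) (_ : 0 ≤ r) (_ : r ≤ q),
          (fun ω : ℝ → ℝ => ω r) ⁻¹' {x | (q : ℝ) ^ κ * ψ q - 1 / (n + 1) < |x|} := by
    ext ω
    simp only [ratEvent, Set.mem_setOf_eq, Set.mem_iUnion, Set.mem_iInter, Set.mem_preimage]
    constructor
    · rintro ⟨δ, h1, h2⟩
      exact ⟨δ, h1, fun q hq hqδ n => by
        obtain ⟨r, hr1, hr2, hr3⟩ := h2 q hq hqδ n; exact ⟨r, hr1, hr2, hr3⟩⟩
    · rintro ⟨δ, h1, h2⟩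
      exact ⟨δ, h1, fun q hq hqδ n => by
        obtain ⟨r, hr1, hr2, hr3⟩ := h2 q hq hqδ n; exact ⟨r, hr1, hr2, hr3⟩⟩
  rw [h]
  refine MeasurableSet.iUnion fun δ => MeasurableSet.iUnion fun _ =>
    MeasurableSet.iInter fun q => MeasurableSet.iInter fun _ =>
      MeasurableSet.iInter fun _ => MeasurableSet.iInter fun n =>
        MeasurableSet.iUnion fun r => MeasurableSet.iUnion fun _ =>
          MeasurableSet.iUnion fun _ => ?_
  exact measurable_pi_apply (r : ℝ) (measurableSet_lt measurable_const measurable_abs)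

lemma le_of_forall_sub_lt {a b : ℝ} (h : ∀ n : ℕ, a - 1 / (n + 1) < b) : a ≤ b := by
  by_contra hlt
  push_neg at hlt
  obtain ⟨n, hn⟩ := exists_nat_one_div_lt (sub_pos.mpr hlt)
  have := h n
  linarith

lemma bdd_sup {ω : ℝ → ℝ} (hc : ContinuousOn ω (Set.Ici 0)) {t : ℝ} (ht : 0 ≤ t) :
    BddAbove (Set.range fun s : Set.Icc (0:ℝ) t => |ω s|) := by
  have h1 : ContinuousOn (fun x => |ω x|) (Set.Icc 0 t) :=
    (hc.mono (fun x hx => hx.1)).abs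
  have h2 := (isCompact_Icc.image_of_continuousOn h1).bddAbove
  rwa [Set.image_eq_range] at h2

lemma rat_near {s η q : ℝ} (hs : 0 ≤ s) (hsq : s ≤ q) (hq : 0 < q) (hη : 0 < η) :
    ∃ r : ℚ, 0 ≤ (r:ℝ) ∧ (r:ℝ) ≤ q ∧ |(r:ℝ) - s| < η := by
  rcases eq_or_lt_of_le hs with h0 | h0
  · obtain ⟨r, hr1, hr2⟩ := exists_rat_btwn (lt_min hq hη)
    refine ⟨r, hr1.le, (lt_of_lt_of_le hr2 (min_le_left _ _)).le, ?_⟩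
    rw [← h0, sub_zero, abs_of_nonneg hr1.le]
    exact lt_of_lt_of_le hr2 (min_le_right _ _)
  · obtain ⟨r, hr1, hr2⟩ := exists_rat_btwn (show max (s - η) 0 < s from max_lt (by linarith) h0)
    have h01 : (0:ℝ) ≤ r := le_trans (le_max_right _ _) hr1.le
    refine ⟨r, h01, le_trans hr2.le hsq, ?_⟩
    have : s - η < r := lt_of_le_of_lt (le_max_left _ _) hr1
    rw [abs_sub_lt_iff]
    constructor <;> linarith

lemma mem_ratEvent_iff {κ : ℝ} (hκ : 0 < κ) {ψ : ℝ → ℝ}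
    (hψpos : ∀ x : ℝ, 0 < x → 0 < ψ x) (hψmono : MonotoneOn ψ (Set.Ioi 0))
    {ω : ℝ → ℝ} (hc : ContinuousOn ω (Set.Ici 0)) :
    ω ∈ ratEvent κ ψ ↔ ∃ δ : ℝ, 0 < δ ∧ ∀ t : ℝ, 0 < t → t ≤ δ →
      t ^ κ * ψ t ≤ ⨆ s : Set.Icc (0:ℝ) t, |ω s| := by
  constructor
  · rintro ⟨δ, hδ, H⟩
    refine ⟨(δ:ℝ)/2, by positivity, ?_⟩
    intro t ht htδ
    by_contra hlt
    push_neg at hlt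
    set M : ℝ := ⨆ s : Set.Icc (0:ℝ) t, |ω s| with hM
    set ε : ℝ := t ^ κ * ψ t - M with hε
    have hεpos : 0 < ε := by simp only [hε]; linarith
    have hct : ContinuousWithinAt ω (Set.Ici 0) t := hc t ht.le
    obtain ⟨η, hη, hη'⟩ := Metric.continuousWithinAt_iff.mp hct (ε/2) (by positivity)
    have hδR : (0:ℝ) < δ := by exact_mod_cast hδ
    obtain ⟨q, hq1, hq2⟩ := exists_rat_btwn (show t < min (δ:ℝ) (t + η) from
      lt_min (by linarith) (by linarith))
    have hqpos : (0:ℝ) < q := lt_trans ht hq1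
    have hqposQ : 0 < q := by exact_mod_cast hqpos
    have hqδ : (q:ℝ) < δ := lt_of_lt_of_le hq2 (min_le_left _ _)
    have hqη : (q:ℝ) < t + η := lt_of_lt_of_le hq2 (min_le_right _ _)
    have hqδQ : q ≤ δ := by exact_mod_cast hqδ.le
    have key : ∀ n : ℕ, (q:ℝ) ^ κ * ψ q - 1 / (n + 1) < M + ε/2 := by
      intro n
      obtain ⟨r, hr0, hrq, hlt'⟩ := H q hqposQ hqδQ n
      have hr0R : (0:ℝ) ≤ r := by exact_mod_cast hr0
      have hrqR : (r:ℝ) ≤ q := by exact_mod_cast hrq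
      have hbound : |ω r| ≤ M + ε/2 := by
        rcases le_or_gt ((r:ℝ)) t with hrt | hrt
        · have : |ω r| ≤ M := le_ciSup (bdd_sup hc ht.le) (⟨(r:ℝ), hr0R, hrt⟩ : Set.Icc (0:ℝ) t)
          linarith
        · have hd : dist ((r:ℝ)) t < η := by
            rw [Real.dist_eq, abs_of_nonneg (by linarith)]
            linarith
          have h1 : dist (ω r) (ω t) < ε/2 := hη' hr0R hd
          rw [Real.dist_eq] at h1
          have h2 : |ω t| ≤ M := le_ciSup (bdd_sup hc ht.le) (⟨t, ht.le, le_refl t⟩ : Set.Icc (0:ℝ) t)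
          have h3 : |ω r| - |ω t| ≤ |ω r - ω t| := abs_sub_abs_le_abs_sub _ _
          linarith
      linarith
    have h2 : (q:ℝ) ^ κ * ψ q ≤ M + ε/2 := le_of_forall_sub_lt key
    have h3 : t ^ κ * ψ t ≤ (q:ℝ) ^ κ * ψ q := by
      have ha : t ^ κ ≤ (q:ℝ) ^ κ := Real.rpow_le_rpow ht.le hq1.le hκ.le
      have hb : ψ t ≤ ψ q := hψmono (Set.mem_Ioi.mpr ht) (Set.mem_Ioi.mpr hqpos) hq1.le
      exact mul_le_mul ha hb (hψpos t ht).le (Real.rpow_nonneg hqpos.le κ)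
    simp only [hε] at hεpos
    linarith
  · rintro ⟨δ, hδ, H⟩
    obtain ⟨δ', h0δ', hδ'δ⟩ := exists_rat_btwn hδ
    have h0δ'Q : 0 < δ' := by exact_mod_cast h0δ'
    refine ⟨δ', h0δ'Q, ?_⟩
    intro q hq hqδ' n
    have hqR : (0:ℝ) < q := by exact_mod_cast hq
    have hqδ : (q:ℝ) ≤ δ := le_trans (by exact_mod_cast hqδ') hδ'δ.le
    have hMq := H q hqR hqδ
    haveI : Nonempty (Set.Icc (0:ℝ) (q:ℝ)) := Set.Nonempty.to_subtype (Set.nonempty_Icc.mpr hqR.le)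
    have hnlt : (q:ℝ) ^ κ * ψ q - 1/(n+1) < ⨆ s : Set.Icc (0:ℝ) (q:ℝ), |ω s| := by
      have : (0:ℝ) < 1/(n+1) := by positivity
      linarith
    obtain ⟨s, hs⟩ := exists_lt_of_lt_ciSup hnlt
    set c : ℝ := (q:ℝ) ^ κ * ψ q - 1/(n+1) with hc'
    have hε2 : 0 < |ω s| - c := by linarith [hs]
    have hcs : ContinuousWithinAt ω (Set.Ici 0) s := hc s s.2.1
    obtain ⟨η, hη, hη'⟩ := Metric.continuousWithinAt_iff.mp hcs (|ω s| - c) hε2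
    obtain ⟨r, hr0, hrq, hrs⟩ := rat_near s.2.1 s.2.2 hqR hη
    have hd : dist ((r:ℝ)) (s:ℝ) < η := by rw [Real.dist_eq]; exact hrs
    have h1 : dist (ω r) (ω s) < |ω s| - c := hη' hr0 hd
    rw [Real.dist_eq] at h1
    have h3 : |ω s| - |ω r| ≤ |ω s - ω r| := abs_sub_abs_le_abs_sub _ _
    rw [abs_sub_comm] at h3
    refine ⟨r, by exact_mod_cast hr0, by exact_mod_cast hrq, ?_⟩
    linarith

lemma ratEvent_subset_preimage {κ : ℝ} (hκ : 0 < κ) {ψ : ℝ → ℝ}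
    (hψmono : MonotoneOn ψ (Set.Ioi 0)) :
    ratEvent κ ψ ⊆ (fun (ω : ℝ → ℝ) (t : ℝ) => (2:ℝ) ^ (-κ) * ω (2 * t)) ⁻¹' ratEvent κ ψ := by
  rintro ω ⟨δ, hδ, H⟩
  refine ⟨δ/2, by positivity, ?_⟩
  intro q hq hqδ n
  obtain ⟨r, hr0, hrq, hlt⟩ := H (2*q) (by positivity) (by linarith) n
  refine ⟨r/2, by positivity, by linarith, ?_⟩
  have hqR : (0:ℝ) < q := by exact_mod_cast hq
  have hpow : (0:ℝ) < (2:ℝ) ^ (-κ) := Real.rpow_pos_of_pos two_pos _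
  have hcast : ((2*q : ℚ) : ℝ) = 2 * (q:ℝ) := by push_cast; ring
  have hcast2 : (2 : ℝ) * ((r/2 : ℚ) : ℝ) = (r:ℝ) := by push_cast; ring
  rw [hcast] at hlt
  have habs : |(2:ℝ) ^ (-κ) * ω ((2:ℝ) * ((r/2:ℚ):ℝ))| = (2:ℝ) ^ (-κ) * |ω r| := by
    rw [hcast2, abs_mul, abs_of_pos hpow]
  have hmul : (2:ℝ) ^ (-κ) * ((2 * (q:ℝ)) ^ κ * ψ (2*(q:ℝ)) - 1/(n+1)) <
      (2:ℝ) ^ (-κ) * |ω r| := by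
    exact mul_lt_mul_of_pos_left hlt hpow
  have hpowmul : (2:ℝ) ^ (-κ) * (2 * (q:ℝ)) ^ κ = (q:ℝ) ^ κ := by
    rw [Real.mul_rpow (by norm_num) hqR.le, ← mul_assoc, ← Real.rpow_add two_pos]
    simp
  have hψle : ψ (q:ℝ) ≤ ψ (2*(q:ℝ)) := hψmono (Set.mem_Ioi.mpr hqR)
    (Set.mem_Ioi.mpr (by linarith)) (by linarith)
  have hpowle : (2:ℝ) ^ (-κ) ≤ 1 :=
    Real.rpow_le_one_of_one_le_of_nonpos (by norm_num) (by linarith)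
  have hqκ : (0:ℝ) ≤ (q:ℝ) ^ κ := Real.rpow_nonneg hqR.le κ
  have hn : (0:ℝ) < 1/(n+1) := by positivity
  have h1 : (q:ℝ) ^ κ * ψ (q:ℝ) ≤ (q:ℝ) ^ κ * ψ (2*(q:ℝ)) :=
    mul_le_mul_of_nonneg_left hψle hqκ
  have h2 : (2:ℝ) ^ (-κ) * (1/(n+1)) ≤ 1 * (1/(n+1)) :=
    mul_le_mul_of_nonneg_right hpowle hn.le
  rw [habs]
  have hexp : (2:ℝ) ^ (-κ) * ((2 * (q:ℝ)) ^ κ * ψ (2*(q:ℝ)) - 1/(n+1)) =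
      (q:ℝ) ^ κ * ψ (2*(q:ℝ)) - (2:ℝ) ^ (-κ) * (1/(n+1)) := by
    rw [mul_sub, ← mul_assoc, hpowmul]
  rw [hexp] at hmul
  have : ((2*q : ℚ) : ℝ) = 2 * (q:ℝ) := hcast
  push_cast
  push_cast at hmul h1
  linarith

/-- Proposition 3.3, zero–one law for ergodic self-similar processes:
let `μ` be a probability measure on path space (functions `ℝ → ℝ`, with the product
σ-algebra), concentrated on paths that are continuous on `[0,∞)` and vanish at `0`.
Assume that for each `a > 0` the scaling transformation
`(S_{κ,a} ω)(t) = a^{-κ} ω(at)` preserves `μ` (self-similarity with index `κ`) and that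
`S_{κ,a}` is ergodic for every `a > 0`, `a ≠ 1`. Then for every increasing
`ψ : (0,∞) → (0,∞)` the event
`E = {ω : ∃ δ > 0, sup_{0 ≤ s ≤ t} |ω(s)| ≥ t^κ ψ(t) for all 0 < t ≤ δ}`
has `μ(E) = 0` or `μ(E) = 1`. -/
theorem selfSimilar_zero_one_law (κ : ℝ) (hκ : 0 < κ)
    (μ : Measure (ℝ → ℝ)) [IsProbabilityMeasure μ]
    (hcont : ∀ᵐ ω ∂μ, ContinuousOn ω (Set.Ici 0))
    (h0 : ∀ᵐ ω ∂μ, ω 0 = 0)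
    (hinv : ∀ a : ℝ, 0 < a →
      MeasurePreserving (fun (ω : ℝ → ℝ) (t : ℝ) => a ^ (-κ) * ω (a * t)) μ μ)
    (herg : ∀ a : ℝ, 0 < a → a ≠ 1 →
      Ergodic (fun (ω : ℝ → ℝ) (t : ℝ) => a ^ (-κ) * ω (a * t)) μ)
    (ψ : ℝ → ℝ) (hψpos : ∀ x : ℝ, 0 < x → 0 < ψ x)
    (hψmono : MonotoneOn ψ (Set.Ioi 0)) :
    μ {ω : ℝ → ℝ | ∃ δ : ℝ, 0 < δ ∧ ∀ t : ℝ, 0 < t → t ≤ δ →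
        t ^ κ * ψ t ≤ ⨆ s : Set.Icc (0:ℝ) t, |ω s|} = 0 ∨
      μ {ω : ℝ → ℝ | ∃ δ : ℝ, 0 < δ ∧ ∀ t : ℝ, 0 < t → t ≤ δ →
        t ^ κ * ψ t ≤ ⨆ s : Set.Icc (0:ℝ) t, |ω s|} = 1 := by
  have hTe : Ergodic (fun (ω : ℝ → ℝ) (t : ℝ) => (2:ℝ) ^ (-κ) * ω (2 * t)) μ :=
    herg 2 two_pos (by norm_num)
  have hms : MeasurableSet (ratEvent κ ψ) := ratEvent_measurableSet κ ψ
  have hsub : ratEvent κ ψ ≤ᵐ[μ]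
      (fun (ω : ℝ → ℝ) (t : ℝ) => (2:ℝ) ^ (-κ) * ω (2 * t)) ⁻¹' ratEvent κ ψ :=
    (ratEvent_subset_preimage hκ hψmono).eventuallyLE
  have h01 := hTe.ae_empty_or_univ_of_ae_le_preimage' hms.nullMeasurableSet hsub
    (measure_ne_top μ _)
  have hAE : {ω : ℝ → ℝ | ∃ δ : ℝ, 0 < δ ∧ ∀ t : ℝ, 0 < t → t ≤ δ →
      t ^ κ * ψ t ≤ ⨆ s : Set.Icc (0:ℝ) t, |ω s|} =ᵐ[μ] ratEvent κ ψ := by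
    rw [Filter.eventuallyEq_set]
    filter_upwards [hcont] with ω hcω
    exact (mem_ratEvent_iff hκ hψpos hψmono hcω).symm
  rcases h01 with h | h
  · left
    rw [measure_congr (hAE.trans h)]
    simp
  · right
    rw [measure_congr (hAE.trans h)]
    simp
end

section
/- Let H ∈ (0,1) and K ∈ (0,1], and define Q_{H,K} : [0,1] → ℝ by Q_{H,K}(z) = R^{H,K}(1,z) / z^{HK} = 2^{−K}[(1 + z^{2H})^K − (1−z)^{2HK}] z^{−HK} for z ∈ (0,1] and Q_{H,K}(0) = 0. Then: (i) Q_{H,K} takes values in [0,1] and Q_{H,K}(1) = 1; (ii) Q_{H,K} is strictly increasing on [0,1]; and (iii) there exist δ > 0 and a constant c = c(δ,H,K) > 0 such that for all z ∈ (1−δ, 1) and all integers n ≥ 1, (Q_{H,K}(z))^n ≤ exp(−c · n · (1−z)^{2H}). -/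
/-- The normalized covariance `Q_{H,K}(z) = R^{H,K}(1,z)/z^{HK}` for `z ∈ (0,1]`,
with `Q_{H,K}(0) = 0`. -/
noncomputable def Qbif (H K z : ℝ) : ℝ :=
  if z = 0 then 0 else Rbif H K 1 z / z ^ (H * K)

open Real Set

/-- Subadditivity of `x ↦ x ^ p` for `0 ≤ p ≤ 1` on nonnegative reals. -/
lemma rpow_add_le_add_rpow' {x y : ℝ} (p : ℝ) (hx : 0 ≤ x) (hy : 0 ≤ y)
    (hp : 0 ≤ p) (hp1 : p ≤ 1) : (x + y) ^ p ≤ x ^ p + y ^ p := by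
  lift x to NNReal using hx
  lift y to NNReal using hy
  exact_mod_cast NNReal.rpow_add_le_add_rpow x y hp hp1

/-- Explicit formula for `Qbif` on `(0,1]`. -/
lemma Qbif_eq {H K z : ℝ} (hz0 : 0 < z) (hz1 : z ≤ 1) :
    Qbif H K z = 2 ^ (-K) * ((z ^ (2*H) + 1) ^ K - (1 - z) ^ (2*H*K)) / z ^ (H*K) := by
  rw [Qbif, if_neg hz0.ne', Rbif, Real.one_rpow, abs_of_nonpos (by linarith : z - 1 ≤ 0),
    neg_sub]

lemma Qbif_one {H K : ℝ} (hH : 0 < H) (hK : 0 < K) : Qbif H K 1 = 1 := by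
  rw [Qbif_eq one_pos le_rfl, Real.one_rpow, sub_self,
    Real.zero_rpow (by positivity : 2*H*K ≠ 0), Real.one_rpow, sub_zero]
  norm_num
  rw [← Real.rpow_add two_pos]
  norm_num

lemma Qbif_pos {H K z : ℝ} (hH : 0 < H) (hK : 0 < K) (hz0 : 0 < z) (hz1 : z ≤ 1) :
    0 < Qbif H K z := by
  rw [Qbif_eq hz0 hz1]
  have h1 : (1 - z) ^ (2*H*K) ≤ 1 :=
    Real.rpow_le_one (by linarith) (by linarith) (by positivity)
  have h2 : (1:ℝ) < (z ^ (2*H) + 1) ^ K := by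
    have : (1:ℝ) < z ^ (2*H) + 1 := by
      nlinarith [Real.rpow_pos_of_pos hz0 (2*H)]
    exact (Real.one_lt_rpow_iff_of_pos (by linarith)).mpr (Or.inl ⟨this, hK⟩)
  have h3 : 0 < z ^ (H*K) := Real.rpow_pos_of_pos hz0 _
  have h4 : (0:ℝ) < 2 ^ (-K) := Real.rpow_pos_of_pos two_pos _
  apply div_pos (mul_pos h4 (by linarith)) h3

lemma Qbif_contOn {H K : ℝ} (hH : 0 < H) (hK : 0 < K) :
    ContinuousOn (Qbif H K) (Ioc (0:ℝ) 1) := by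
  apply ContinuousOn.congr
    (f := fun z : ℝ => 2 ^ (-K) * ((z ^ (2*H) + 1) ^ K - (1 - z) ^ (2*H*K)) / z ^ (H*K))
    ?_ (fun z hz => Qbif_eq hz.1 hz.2)
  intro z hz
  have c1 : ContinuousAt (fun z : ℝ => z ^ (2*H)) z :=
    Real.continuousAt_rpow_const z _ (Or.inl hz.1.ne')
  have c2 : ContinuousAt (fun z : ℝ => (z ^ (2*H) + 1) ^ K) z :=
    (c1.add continuousAt_const).rpow_const (Or.inr hK.le)
  have c3 : ContinuousAt (fun z : ℝ => (1 - z) ^ (2*H*K)) z :=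
    (continuousAt_const.sub continuousAt_id).rpow_const (Or.inr (by positivity))
  have c4 : ContinuousAt (fun z : ℝ => z ^ (H*K)) z :=
    Real.continuousAt_rpow_const z _ (Or.inl hz.1.ne')
  exact ((continuousAt_const.mul (c2.sub c3)).div c4
    (Real.rpow_pos_of_pos hz.1 _).ne').continuousWithinAt

lemma Qbif_deriv_pos {H K z : ℝ} (hH : 0 < H) (hH1 : H < 1) (hK : 0 < K) (hK1 : K ≤ 1)
    (hz0 : 0 < z) (hz1 : z < 1) : 0 < deriv (Qbif H K) z := by
  have hA1 : (1:ℝ) ≤ z ^ (2*H) + 1 := by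
    nlinarith [Real.rpow_pos_of_pos hz0 (2*H)]
  have hDne : z ^ (H*K) ≠ 0 := (Real.rpow_pos_of_pos hz0 _).ne'
  -- derivative of the explicit formula
  have hA : HasDerivAt (fun z : ℝ => (z ^ (2*H) + 1) ^ K)
      ((2*H) * z ^ (2*H-1) * K * (z ^ (2*H) + 1) ^ (K-1)) z :=
    ((Real.hasDerivAt_rpow_const (Or.inl hz0.ne')).add_const 1).rpow_const
      (Or.inl (by linarith))
  have hB : HasDerivAt (fun z : ℝ => (1 - z) ^ (2*H*K))
      ((-1) * (2*H*K) * (1 - z) ^ (2*H*K-1)) z :=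
    ((hasDerivAt_id z).const_sub 1).rpow_const (Or.inl (by linarith : (1:ℝ) - z ≠ 0))
  have hD : HasDerivAt (fun z : ℝ => z ^ (H*K)) ((H*K) * z ^ (H*K-1)) z :=
    Real.hasDerivAt_rpow_const (Or.inl hz0.ne')
  have hN : HasDerivAt
      (fun z : ℝ => 2 ^ (-K) * ((z ^ (2*H) + 1) ^ K - (1 - z) ^ (2*H*K)))
      (2 ^ (-K) * ((2*H) * z ^ (2*H-1) * K * (z ^ (2*H) + 1) ^ (K-1)
        - (-1) * (2*H*K) * (1 - z) ^ (2*H*K-1))) z := (hA.sub hB).const_mul _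
  have hQf : HasDerivAt
      (fun z : ℝ => 2 ^ (-K) * ((z ^ (2*H) + 1) ^ K - (1 - z) ^ (2*H*K)) / z ^ (H*K))
      ((2 ^ (-K) * ((2*H) * z ^ (2*H-1) * K * (z ^ (2*H) + 1) ^ (K-1)
          - (-1) * (2*H*K) * (1 - z) ^ (2*H*K-1)) * z ^ (H*K)
        - 2 ^ (-K) * ((z ^ (2*H) + 1) ^ K - (1 - z) ^ (2*H*K)) * ((H*K) * z ^ (H*K-1)))
        / (z ^ (H*K)) ^ 2) z := hN.div hD hDne
  have hQ : HasDerivAt (Qbif H K) _ z := hQf.congr_of_eventuallyEq <| by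
    filter_upwards [Ioo_mem_nhds hz0 hz1] with x hx using Qbif_eq hx.1 hx.2.le
  rw [hQ.deriv]
  apply div_pos _ (by positivity)
  -- rpow rewriting relations
  have eX : z ^ (2*H-1) * z = z ^ (2*H) := by
    rw [← Real.rpow_add_one hz0.ne' (2*H-1)]; norm_num
  have eA : (z ^ (2*H) + 1) ^ (K-1) * (z ^ (2*H) + 1) = (z ^ (2*H) + 1) ^ K := by
    rw [← Real.rpow_add_one (by linarith : z ^ (2*H) + 1 ≠ 0) (K-1)]; norm_num
  have eB : (1 - z) ^ (2*H*K-1) * (1 - z) = (1 - z) ^ (2*H*K) := by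
    rw [← Real.rpow_add_one (by linarith : (1:ℝ) - z ≠ 0) (2*H*K-1)]; norm_num
  have eW : z ^ (H*K-1) * z = z ^ (H*K) := by
    rw [← Real.rpow_add_one hz0.ne' (H*K-1)]; norm_num
  -- the key inequality
  have hzH : 0 < z ^ (2*H) := Real.rpow_pos_of_pos hz0 _
  have p1 : (z ^ (2*H) + 1) ^ (K-1) ≤ 1 :=
    Real.rpow_le_one_of_one_le_of_nonpos (by linarith) (by linarith)
  have p2 : z ^ (2:ℝ) < z ^ (2*H) :=
    Real.rpow_lt_rpow_of_exponent_gt hz0 hz1 (by linarith)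
  have p3 : z ^ (2:ℝ) = z ^ 2 := by
    rw [← Real.rpow_natCast z 2]; norm_num
  rw [p3] at p2
  have p4 : (1 - z) ≤ (1-z) ^ (2*H*K-1) := by
    have := Real.rpow_le_rpow_of_exponent_ge (by linarith : (0:ℝ) < 1 - z)
      (by linarith) (by nlinarith : 2*H*K - 1 ≤ (1:ℝ))
    rwa [Real.rpow_one] at this
  have p5 : z ^ (2*H) < 1 := Real.rpow_lt_one hz0.le hz1 (by positivity)
  have key : (z ^ (2*H) + 1) ^ (K-1) * (1 - z ^ (2*H)) < (1-z) ^ (2*H*K-1) * (1+z) := by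
    have q1 : (z ^ (2*H) + 1) ^ (K-1) * (1 - z ^ (2*H)) ≤ 1 * (1 - z ^ (2*H)) :=
      mul_le_mul_of_nonneg_right p1 (by linarith)
    have q2 : (1 + z) * (1 - z) ≤ (1 + z) * ((1-z) ^ (2*H*K-1)) :=
      mul_le_mul_of_nonneg_left p4 (by linarith)
    nlinarith [q1, q2, p2]
  -- the numerator equals a manifestly positive expression
  have expand : 2 ^ (-K) * ((2*H) * z ^ (2*H-1) * K * (z ^ (2*H) + 1) ^ (K-1)
          - (-1) * (2*H*K) * (1 - z) ^ (2*H*K-1)) * z ^ (H*K)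
        - 2 ^ (-K) * ((z ^ (2*H) + 1) ^ K - (1 - z) ^ (2*H*K)) * ((H*K) * z ^ (H*K-1))
      = 2 ^ (-K) * (H*K) * z ^ (H*K-1) *
        ((1-z) ^ (2*H*K-1) * (1+z) - (z ^ (2*H) + 1) ^ (K-1) * (1 - z ^ (2*H))) := by
    rw [← eA, ← eB, ← eW, ← eX]; ring
  rw [expand]
  have h2K : (0:ℝ) < 2 ^ (-K) := Real.rpow_pos_of_pos two_pos _
  have hW : 0 < z ^ (H*K-1) := Real.rpow_pos_of_pos hz0 _
  have hkey := sub_pos.mpr key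
  positivity

lemma Qbif_tail {H K z : ℝ} (hH : 0 < H) (hH1 : H < 1) (hK : 0 < K) (hK1 : K ≤ 1)
    (hz0 : 0 < z) (hz1 : z < 1)
    (hδ : (1 - z) ^ (2*K*(1-H)) ≤ 1/2) :
    Qbif H K z ≤ 1 - (2 ^ (-K) / 2) * (1 - z) ^ (2*H) := by
  have hw0 : (0:ℝ) < 1 - z := by linarith
  have hzH : 0 < z ^ H := Real.rpow_pos_of_pos hz0 _
  have hzH1 : z ^ H ≤ 1 := Real.rpow_le_one hz0.le hz1.le hH.le
  have hD : 0 < z ^ (H*K) := Real.rpow_pos_of_pos hz0 _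
  have h2K : (0:ℝ) < 2 ^ (-K) := Real.rpow_pos_of_pos two_pos _
  have s1 : z ^ H * z ^ H = z ^ (2*H) := by
    rw [← Real.rpow_add hz0]; ring_nf
  have s3 : (z ^ (2*H) + 1) ^ K ≤ (2 * z ^ H) ^ K + ((1 - z ^ H)^2) ^ K := by
    have h : z ^ (2*H) + 1 = 2 * z ^ H + (1 - z ^ H)^2 := by nlinarith [s1]
    rw [h]
    exact rpow_add_le_add_rpow' K (by positivity) (by positivity) hK.le hK1
  have s4 : (2 * z ^ H) ^ K = 2 ^ K * z ^ (H*K) := by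
    rw [Real.mul_rpow (by norm_num) hzH.le, Real.rpow_mul hz0.le]
  have s5 : (1 - z ^ H)^2 ≤ (1 - z)^2 := by
    have hz' : z ≤ z ^ H := by
      have := Real.rpow_le_rpow_of_exponent_ge hz0 hz1.le hH1.le
      rwa [Real.rpow_one] at this
    have h1 : 0 ≤ 1 - z ^ H := by linarith
    nlinarith
  have s6 : ((1 - z ^ H)^2) ^ K ≤ ((1 - z)^2) ^ K :=
    Real.rpow_le_rpow (by positivity) s5 hK.le
  have s7 : ((1 - z)^2) ^ K = (1 - z) ^ (2*K) := by
    rw [← Real.rpow_natCast (1-z) 2, ← Real.rpow_mul hw0.le]; norm_num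
  have s8 : (1 - z) ^ (2*K) ≤ (1/2) * (1 - z) ^ (2*H*K) := by
    have e1 : (1 - z) ^ (2*K) = (1 - z) ^ (2*H*K) * (1 - z) ^ (2*K*(1-H)) := by
      rw [← Real.rpow_add hw0]; ring_nf
    rw [e1]
    have hp : 0 ≤ (1 - z) ^ (2*H*K) := by positivity
    nlinarith [mul_le_mul_of_nonneg_left hδ hp]
  have hnum : (z ^ (2*H) + 1) ^ K - (1 - z) ^ (2*H*K)
      ≤ 2 ^ K * z ^ (H*K) - (1/2) * (1 - z) ^ (2*H*K) := by
    have := s3.trans (by linarith [s6.trans_eq s7, s8] :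
      (2 * z ^ H) ^ K + ((1 - z ^ H)^2) ^ K ≤ 2 ^ K * z ^ (H*K) + (1/2) * (1 - z) ^ (2*H*K))
    linarith
  rw [Qbif_eq hz0 hz1.le, div_le_iff₀ hD]
  have h2 : (2:ℝ) ^ (-K) * 2 ^ K = 1 := by
    rw [← Real.rpow_add two_pos]; norm_num
  have hzK1 : z ^ (H*K) ≤ 1 := Real.rpow_le_one hz0.le hz1.le (by positivity)
  have hw2 : (1 - z) ^ (2*H) ≤ (1 - z) ^ (2*H*K) :=
    Real.rpow_le_rpow_of_exponent_ge hw0 (by linarith) (by nlinarith)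
  have hwpos : 0 < (1 - z) ^ (2*H) := Real.rpow_pos_of_pos hw0 _
  have e2 : 2 ^ (-K) * (2 ^ K * z ^ (H*K) - (1/2) * (1-z) ^ (2*H*K))
      = z ^ (H*K) - (2 ^ (-K) / 2) * (1-z) ^ (2*H*K) := by
    linear_combination z ^ (H*K) * h2
  have step1 : 2 ^ (-K) * ((z ^ (2*H) + 1) ^ K - (1 - z) ^ (2*H*K))
      ≤ z ^ (H*K) - (2 ^ (-K) / 2) * (1 - z) ^ (2*H*K) :=
    (mul_le_mul_of_nonneg_left hnum h2K.le).trans_eq e2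
  have b2 : (1-z) ^ (2*H) * z ^ (H*K) ≤ (1-z) ^ (2*H*K) := by
    have b1 : (1 - z) ^ (2*H) * z ^ (H*K) ≤ (1 - z) ^ (2*H) * 1 :=
      mul_le_mul_of_nonneg_left hzK1 hwpos.le
    linarith [b1, hw2]
  have step2 : (2 ^ (-K) / 2) * ((1 - z) ^ (2*H) * z ^ (H*K))
      ≤ (2 ^ (-K) / 2) * (1 - z) ^ (2*H*K) :=
    mul_le_mul_of_nonneg_left b2 (by positivity)
  linarith [step1, step2]

/-- Lemma 4.12: for `H ∈ (0,1)` and `K ∈ (0,1]`, the function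
`Q_{H,K}` (i) takes values in `[0,1]` on `[0,1]` with `Q_{H,K}(1) = 1`;
(ii) is strictly increasing on `[0,1]`; and (iii) there are `δ > 0` and
`c = c(δ,H,K) > 0` such that `(Q_{H,K}(z))^n ≤ exp(-c n (1-z)^{2H})` for all
`z ∈ (1-δ, 1)` and all integers `n ≥ 1`. -/
theorem Qbif_properties (H K : ℝ) (hH : H ∈ Set.Ioo (0:ℝ) 1)
    (hK : K ∈ Set.Ioc (0:ℝ) 1) :
    (∀ z ∈ Set.Icc (0:ℝ) 1, Qbif H K z ∈ Set.Icc (0:ℝ) 1) ∧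
    Qbif H K 1 = 1 ∧
    StrictMonoOn (Qbif H K) (Set.Icc (0:ℝ) 1) ∧
    ∃ δ c : ℝ, 0 < δ ∧ 0 < c ∧
      ∀ z ∈ Set.Ioo (1 - δ) 1, ∀ n : ℕ, 1 ≤ n →
        Qbif H K z ^ n ≤ Real.exp (-c * n * (1 - z) ^ (2 * H)) := by
  obtain ⟨hH0, hH1⟩ := hH
  obtain ⟨hK0, hK1⟩ := hK
  have hQ1 : Qbif H K 1 = 1 := Qbif_one hH0 hK0
  have mono1 : StrictMonoOn (Qbif H K) (Ioc (0:ℝ) 1) := by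
    apply strictMonoOn_of_deriv_pos (convex_Ioc 0 1) (Qbif_contOn hH0 hK0)
    intro x hx
    rw [interior_Ioc] at hx
    exact Qbif_deriv_pos hH0 hH1 hK0 hK1 hx.1 hx.2
  have monoIcc : StrictMonoOn (Qbif H K) (Icc (0:ℝ) 1) := by
    intro x hx y hy hxy
    rcases eq_or_lt_of_le hx.1 with h0 | h0
    · have hx0 : Qbif H K x = 0 := by rw [← h0, Qbif, if_pos rfl]
      rw [hx0]
      exact Qbif_pos hH0 hK0 (h0.trans_lt hxy) hy.2
    · exact mono1 ⟨h0, hx.2⟩ ⟨h0.trans hxy, hy.2⟩ hxy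
  refine ⟨?_, hQ1, monoIcc, ?_⟩
  · intro z hz
    constructor
    · rcases eq_or_lt_of_le hz.1 with h0 | h0
      · rw [← h0, Qbif, if_pos rfl]
      · exact (Qbif_pos hH0 hK0 h0 hz.2).le
    · rcases eq_or_lt_of_le hz.2 with h1 | h1
      · rw [h1, hQ1]
      · exact le_of_lt (by simpa [hQ1] using monoIcc hz ⟨zero_le_one, le_rfl⟩ h1)
  · have he0 : (0:ℝ) < 2*K*(1-H) := by nlinarith
    refine ⟨min 1 (2 ^ (-(1/(2*K*(1-H))))), 2 ^ (-K)/2,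
      lt_min one_pos (Real.rpow_pos_of_pos two_pos _), by positivity, ?_⟩
    intro z hz n hn
    obtain ⟨hz0', hz1⟩ := hz
    have hδ1 : min (1:ℝ) (2 ^ (-(1/(2*K*(1-H))))) ≤ 1 := min_le_left _ _
    have hz0 : 0 < z := by linarith
    have hw0 : (0:ℝ) < 1 - z := by linarith
    have hwδ : 1 - z < 2 ^ (-(1/(2*K*(1-H)))) := by
      have := min_le_right (1:ℝ) (2 ^ (-(1/(2*K*(1-H)))))
      linarith
    have hhalf : (1 - z) ^ (2*K*(1-H)) ≤ 1/2 := by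
      have h1 : (1-z) ^ (2*K*(1-H)) ≤ ((2:ℝ) ^ (-(1/(2*K*(1-H))))) ^ (2*K*(1-H)) :=
        Real.rpow_le_rpow hw0.le hwδ.le he0.le
      have h2 : ((2:ℝ) ^ (-(1/(2*K*(1-H))))) ^ (2*K*(1-H))
          = 2 ^ ((-(1/(2*K*(1-H)))) * (2*K*(1-H))) :=
        (Real.rpow_mul (by norm_num) _ _).symm
      have h3 : (-(1/(2*K*(1-H)))) * (2*K*(1-H)) = -1 := by
        field_simp
      rw [h2, h3, Real.rpow_neg_one] at h1
      linarith [h1]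
    have hQle := Qbif_tail hH0 hH1 hK0 hK1 hz0 hz1 hhalf
    have hQpos := (Qbif_pos hH0 hK0 hz0 hz1.le).le
    have hexp : Qbif H K z ≤ Real.exp (-((2 ^ (-K)/2) * (1-z) ^ (2*H))) := by
      have := Real.add_one_le_exp (-((2 ^ (-K)/2) * (1-z) ^ (2*H)))
      linarith [hQle, this]
    calc Qbif H K z ^ n
        ≤ (Real.exp (-((2 ^ (-K)/2) * (1-z) ^ (2*H)))) ^ n :=
          pow_le_pow_left₀ hQpos hexp n
      _ = Real.exp ((n : ℝ) * (-((2 ^ (-K)/2) * (1-z) ^ (2*H)))) :=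
          (Real.exp_nat_mul _ n).symm
      _ = Real.exp (-(2 ^ (-K)/2) * n * (1 - z) ^ (2 * H)) := by
          congr 1; ring
end
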